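/- arXiv:2605.25352 — 3 statements merged into one kernel-verified Lean document; each statement's English description precedes it below -/
import Mathlib

section
/- (Theorem 3.2.) Let K ≥ 2, d ≥ 1, and for each i ∈ {1,…,K} let μ_i ∈ ℝ^d, let Σ_i be a symmetric positive definite d×d real matrix, let r_i > 0, and set S_i = S(μ_i,Σ_i,r_i) and R_i = 2ε/√(λ_min(Σ_i)) + r_i, where ε ≥ 0. Suppose each Gaussian N(μ_i,Σ_i) is (C,ε,δ)-localized on S_i, and suppose that for every i ∈ {1,…,K}, Σ_{j≠i} ℙ_{x∼N(μ_i,Σ_i)}((x−μ_j)ᵀΣ_j⁻¹(x−μ_j) ≤ R_j²) ≤ γ. Then for every i ∈ {1,…,K}, ℙ_{x∼N(μ_i,Σ_i)}(x ∈ ∪_{j≠i} S_j^{+2ε}) ≤ γ; that is, the mixture distribution with these class conditionals is (C,ε,δ,γ)-strongly localized with respect to the ℓ₂ distance. -/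
open MeasureTheory Matrix Real

/-- The multivariate Gaussian measure `N(μ, Σ)` on `ℝ^d = Fin d → ℝ`, defined via its density
with respect to Lebesgue measure. -/
noncomputable def gaussianMeasure {d : ℕ} (μ : Fin d → ℝ) (S : Matrix (Fin d) (Fin d) ℝ) :
    Measure (Fin d → ℝ) :=
  volume.withDensity fun x =>
    ENNReal.ofReal ((2 * π) ^ (-(d : ℝ) / 2) * S.det ^ (-(1 : ℝ) / 2) *
      Real.exp (-(1 / 2) * ((x - μ) ⬝ᵥ (S⁻¹ *ᵥ (x - μ)))))

/-- A measure `p` on `ℝ^d` is `(C, ε, δ)`-localized on a set `A` if `p(A) ≥ 1 - δ` and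
`Vol(A) ≤ C · exp(-ε)`. -/
def IsLocalized {d : ℕ} (p : Measure (Fin d → ℝ)) (C ε δ : ℝ) (A : Set (Fin d → ℝ)) : Prop :=
  ENNReal.ofReal (1 - δ) ≤ p A ∧ volume A ≤ ENNReal.ofReal (C * Real.exp (-ε))

/-- The Euclidean (ℓ₂) norm of a vector in `Fin d → ℝ`. -/
noncomputable def l2norm {d : ℕ} (v : Fin d → ℝ) : ℝ :=
  Real.sqrt (v ⬝ᵥ v)

/-- The Mahalanobis ellipsoid `S(μ, Σ, r) = {x : (x-μ)ᵀ Σ⁻¹ (x-μ) ≤ r²}`. -/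
def ellipsoid {d : ℕ} (μ : Fin d → ℝ) (S : Matrix (Fin d) (Fin d) ℝ) (r : ℝ) :
    Set (Fin d → ℝ) :=
  {x | (x - μ) ⬝ᵥ (S⁻¹ *ᵥ (x - μ)) ≤ r ^ 2}

/-- The `t`-expansion of a set in the ℓ₂ distance. -/
def expand {d : ℕ} (A : Set (Fin d → ℝ)) (t : ℝ) : Set (Fin d → ℝ) :=
  {x | ∃ s ∈ A, l2norm (x - s) ≤ t}

/-- The smallest eigenvalue of a symmetric matrix, given by the Rayleigh quotient
characterization: the infimum of `vᵀ M v` over unit vectors `v`. -/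
noncomputable def minEig {d : ℕ} (M : Matrix (Fin d) (Fin d) ℝ) : ℝ :=
  ⨅ v : {v : Fin d → ℝ // v ⬝ᵥ v = 1}, (v : Fin d → ℝ) ⬝ᵥ (M *ᵥ (v : Fin d → ℝ))

/-!
A point within ℓ₂-distance `t` of the ellipsoid `S(μ, Σ, r)` lies in `S(μ, Σ, t / √λ_min(Σ) + r)`:
the Mahalanobis distance `√(vᵀ Σ⁻¹ v)` obeys the triangle inequality and is at most
`‖v‖₂ / √λ_min(Σ)`. Hence each `S_j^{+2ε}` is contained in the ellipsoid of radius `R_j`, and the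
union bound turns the hypothesis on the sum of these probabilities into the claim.
-/

section

variable {d : ℕ}

lemma dotProduct_ofLp_self (x : EuclideanSpace ℝ (Fin d)) : x.ofLp ⬝ᵥ x.ofLp = ‖x‖ ^ 2 := by
  rw [← real_inner_self_eq_norm_sq, EuclideanSpace.inner_eq_star_dotProduct, star_trivial]

lemma l2norm_eq_norm_toLp (v : Fin d → ℝ) : l2norm v = ‖WithLp.toLp 2 v‖ := by
  rw [l2norm, ← WithLp.ofLp_toLp 2 v, dotProduct_ofLp_self, Real.sqrt_sq (norm_nonneg _),
    WithLp.ofLp_toLp]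

lemma l2norm_sq (v : Fin d → ℝ) : l2norm v ^ 2 = v ⬝ᵥ v := by
  rw [l2norm_eq_norm_toLp, ← dotProduct_ofLp_self, WithLp.ofLp_toLp]

lemma l2norm_nonneg (v : Fin d → ℝ) : 0 ≤ l2norm v := Real.sqrt_nonneg _

lemma l2norm_add_le (u v : Fin d → ℝ) : l2norm (u + v) ≤ l2norm u + l2norm v := by
  simpa only [l2norm_eq_norm_toLp, WithLp.toLp_add] using norm_add_le _ _

lemma dotProduct_le_l2norm_mul_l2norm (u v : Fin d → ℝ) : u ⬝ᵥ v ≤ l2norm u * l2norm v := by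
  simpa only [l2norm_eq_norm_toLp, EuclideanSpace.inner_eq_star_dotProduct, star_trivial,
    WithLp.ofLp_toLp, dotProduct_comm] using real_inner_le_norm (WithLp.toLp 2 u) (WithLp.toLp 2 v)

open scoped MatrixOrder in
lemma Matrix.PosSemidef.exists_eq_conjTranspose_mul_self {n : Type*} [Fintype n] [DecidableEq n]
    {M : Matrix n n ℝ} (hM : M.PosSemidef) : ∃ B : Matrix n n ℝ, M = Bᴴ * B :=
  CStarAlgebra.nonneg_iff_eq_star_mul_self.mp hM.nonneg

lemma Matrix.PosSemidef.sqrt_dotProduct_mulVec_add_le {M : Matrix (Fin d) (Fin d) ℝ}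
    (hM : M.PosSemidef) (u v : Fin d → ℝ) :
    √((u + v) ⬝ᵥ (M *ᵥ (u + v))) ≤ √(u ⬝ᵥ (M *ᵥ u)) + √(v ⬝ᵥ (M *ᵥ v)) := by
  obtain ⟨B, rfl⟩ := hM.exists_eq_conjTranspose_mul_self
  have hB : ∀ w, √(w ⬝ᵥ ((Bᴴ * B) *ᵥ w)) = l2norm (B *ᵥ w) := by
    intro w
    rw [l2norm, ← mulVec_mulVec, dotProduct_mulVec, vecMul_conjTranspose]
    simp only [star_trivial]
  rw [hB, hB, hB, mulVec_add]
  exact l2norm_add_le _ _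

lemma minEig_pos (hd : 1 ≤ d) {M : Matrix (Fin d) (Fin d) ℝ} (hM : M.PosDef) : 0 < minEig M := by
  let f : EuclideanSpace ℝ (Fin d) → ℝ := fun x => x.ofLp ⬝ᵥ (M *ᵥ x.ofLp)
  have hf : Continuous f := by fun_prop
  have hne : (Metric.sphere (0 : EuclideanSpace ℝ (Fin d)) 1).Nonempty :=
    ⟨EuclideanSpace.single ⟨0, hd⟩ 1, by simp⟩
  obtain ⟨x₀, hx₀, hmin⟩ := (isCompact_sphere 0 1).exists_isMinOn hne hf.continuousOn
  have hunit : x₀.ofLp ⬝ᵥ x₀.ofLp = 1 := by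
    rw [dotProduct_ofLp_self, mem_sphere_zero_iff_norm.mp hx₀, one_pow]
  have hx₀ne : x₀.ofLp ≠ 0 := fun h => by simp [h] at hunit
  have : Nonempty {v : Fin d → ℝ // v ⬝ᵥ v = 1} := ⟨⟨x₀.ofLp, hunit⟩⟩
  calc 0 < f x₀ := by simpa using hM.dotProduct_mulVec_pos hx₀ne
    _ ≤ minEig M := le_ciInf fun v => hmin <| by
        rw [mem_sphere_zero_iff_norm, ← l2norm_eq_norm_toLp, l2norm, v.2, Real.sqrt_one]

lemma minEig_mul_dotProduct_self_le {M : Matrix (Fin d) (Fin d) ℝ} (hM : M.PosSemidef)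
    (v : Fin d → ℝ) : minEig M * (v ⬝ᵥ v) ≤ v ⬝ᵥ (M *ᵥ v) := by
  rcases eq_or_ne v 0 with rfl | hv
  · simp
  have hbdd :
      BddBelow (Set.range fun w : {w : Fin d → ℝ // w ⬝ᵥ w = 1} => w.1 ⬝ᵥ (M *ᵥ w.1)) :=
    ⟨0, by rintro _ ⟨w, rfl⟩; simpa using hM.dotProduct_mulVec_nonneg w.1⟩
  have hv' : l2norm v ≠ 0 := fun h =>
    hv <| dotProduct_self_eq_zero.mp <| by rw [← l2norm_sq, h, sq, zero_mul]
  set c := (l2norm v)⁻¹ with hc_def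
  have hc : c * c * (v ⬝ᵥ v) = 1 := by
    rw [← l2norm_sq, hc_def]; field_simp
  have hunit : (c • v) ⬝ᵥ (c • v) = 1 := by
    rw [smul_dotProduct, dotProduct_smul, smul_eq_mul, smul_eq_mul, ← mul_assoc, hc]
  have hle : minEig M ≤ (c • v) ⬝ᵥ (M *ᵥ (c • v)) := ciInf_le hbdd ⟨c • v, hunit⟩
  rw [mulVec_smul, smul_dotProduct, dotProduct_smul, smul_eq_mul, smul_eq_mul] at hle
  calc minEig M * (v ⬝ᵥ v) ≤ c * (c * (v ⬝ᵥ (M *ᵥ v))) * (v ⬝ᵥ v) := by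
        gcongr; rw [← l2norm_sq]; positivity
    _ = v ⬝ᵥ (M *ᵥ v) := by linear_combination (v ⬝ᵥ (M *ᵥ v)) * hc

lemma dotProduct_inv_mulVec_le (hd : 1 ≤ d) {M : Matrix (Fin d) (Fin d) ℝ} (hM : M.PosDef)
    (w : Fin d → ℝ) : w ⬝ᵥ (M⁻¹ *ᵥ w) ≤ (w ⬝ᵥ w) / minEig M := by
  have hmin := minEig_pos hd hM
  set u := M⁻¹ *ᵥ w
  have hMu : M *ᵥ u = w := by
    rw [mulVec_mulVec, mul_nonsing_inv _ (isUnit_iff_ne_zero.mpr hM.det_pos.ne'), one_mulVec]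
  have hq : w ⬝ᵥ u = u ⬝ᵥ (M *ᵥ u) := by rw [hMu, dotProduct_comm]
  have hlower := minEig_mul_dotProduct_self_le hM.posSemidef u
  have hupper := dotProduct_le_l2norm_mul_l2norm w u
  rw [← hq, ← l2norm_sq] at hlower
  rw [← l2norm_sq, le_div_iff₀ hmin]
  -- `λ ‖u‖² ≤ uᵀ M u = w ⬝ u ≤ ‖w‖ ‖u‖`, so `λ ‖u‖ ≤ ‖w‖`
  have hscale : minEig M * l2norm u ≤ l2norm w := by
    rcases (l2norm_nonneg u).eq_or_lt with hu | hu
    · rw [← hu, mul_zero]; exact l2norm_nonneg w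
    · exact le_of_mul_le_mul_right (by nlinarith) hu
  calc w ⬝ᵥ u * minEig M ≤ l2norm w * l2norm u * minEig M := by gcongr
    _ = l2norm w * (minEig M * l2norm u) := by ring
    _ ≤ l2norm w ^ 2 := by rw [sq]; gcongr; exact l2norm_nonneg w

lemma sqrt_dotProduct_inv_mulVec_le (hd : 1 ≤ d) {M : Matrix (Fin d) (Fin d) ℝ} (hM : M.PosDef)
    (w : Fin d → ℝ) : √(w ⬝ᵥ (M⁻¹ *ᵥ w)) ≤ l2norm w / √(minEig M) := by
  rw [l2norm, ← Real.sqrt_div' _ (minEig_pos hd hM).le]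
  exact Real.sqrt_le_sqrt (dotProduct_inv_mulVec_le hd hM w)

lemma expand_ellipsoid_subset (hd : 1 ≤ d) (μ : Fin d → ℝ) {M : Matrix (Fin d) (Fin d) ℝ}
    (hM : M.PosDef) {r : ℝ} (hr : 0 ≤ r) (t : ℝ) :
    expand (ellipsoid μ M r) t ⊆ ellipsoid μ M (t / √(minEig M) + r) := by
  rintro x ⟨s, hs, hxs⟩
  have hxs' : √((x - s) ⬝ᵥ (M⁻¹ *ᵥ (x - s))) ≤ t / √(minEig M) :=
    (sqrt_dotProduct_inv_mulVec_le hd hM _).trans (by gcongr)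
  have hsμ : √((s - μ) ⬝ᵥ (M⁻¹ *ᵥ (s - μ))) ≤ r := Real.sqrt_le_iff.mpr ⟨hr, hs⟩
  have hxμ : √((x - μ) ⬝ᵥ (M⁻¹ *ᵥ (x - μ))) ≤ t / √(minEig M) + r := by
    rw [← sub_add_sub_cancel x s μ]
    exact (hM.inv.posSemidef.sqrt_dotProduct_mulVec_add_le _ _).trans (add_le_add hxs' hsμ)
  exact (Real.sqrt_le_iff.mp hxμ).2

end

theorem stmt4_general {K d : ℕ} (hd : 1 ≤ d)
    (μ : Fin K → Fin d → ℝ) (S : Fin K → Matrix (Fin d) (Fin d) ℝ)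
    (hS : ∀ i, (S i).PosDef) (r : Fin K → ℝ) (hr : ∀ i, 0 < r i)
    (ε γ : ℝ)
    (R : Fin K → ℝ) (hR : ∀ i, R i = 2 * ε / Real.sqrt (minEig (S i)) + r i)
    (hsum : ∀ i, ∑ j ∈ Finset.univ.erase i,
      gaussianMeasure (μ i) (S i) (ellipsoid (μ j) (S j) (R j)) ≤ ENNReal.ofReal γ) :
    ∀ i, gaussianMeasure (μ i) (S i)
        (⋃ j ∈ Finset.univ.erase i, expand (ellipsoid (μ j) (S j) (r j)) (2 * ε)) ≤
      ENNReal.ofReal γ := by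
  intro i
  calc _ ≤ ∑ j ∈ Finset.univ.erase i,
          gaussianMeasure (μ i) (S i) (expand (ellipsoid (μ j) (S j) (r j)) (2 * ε)) :=
        measure_biUnion_finset_le _ _
    _ ≤ ∑ j ∈ Finset.univ.erase i,
          gaussianMeasure (μ i) (S i) (ellipsoid (μ j) (S j) (R j)) := by
        gcongr with j
        rw [hR j]
        exact expand_ellipsoid_subset hd (μ j) (hS j) (hr j).le (2 * ε)
    _ ≤ ENNReal.ofReal γ := hsum i

theorem stmt4 {K d : ℕ} (hK : 2 ≤ K) (hd : 1 ≤ d)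
    (μ : Fin K → Fin d → ℝ) (S : Fin K → Matrix (Fin d) (Fin d) ℝ)
    (hS : ∀ i, (S i).PosDef) (r : Fin K → ℝ) (hr : ∀ i, 0 < r i)
    (C ε δ γ : ℝ) (hε : 0 ≤ ε) (hγ : 0 ≤ γ)
    (R : Fin K → ℝ) (hR : ∀ i, R i = 2 * ε / Real.sqrt (minEig (S i)) + r i)
    (hloc : ∀ i, IsLocalized (gaussianMeasure (μ i) (S i)) C ε δ
      (ellipsoid (μ i) (S i) (r i)))
    (hsum : ∀ i, ∑ j ∈ Finset.univ.erase i,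
      gaussianMeasure (μ i) (S i) (ellipsoid (μ j) (S j) (R j)) ≤ ENNReal.ofReal γ) :
    ∀ i, gaussianMeasure (μ i) (S i)
        (⋃ j ∈ Finset.univ.erase i, expand (ellipsoid (μ j) (S j) (r j)) (2 * ε)) ≤
      ENNReal.ofReal γ :=
  stmt4_general hd μ S hS r hr ε γ R hR hsum
end

section
/- (Deterministic form of Lemma E.9.) Let m, m̂, c, ĉ, λ, λ̂ be real numbers with m ≥ 0, c ≥ 0, ĉ ≥ 0, c² ≥ m·λ and ĉ² ≥ m̂·λ̂. Write ε_c = |ĉ − c|, ε_m = |m̂ − m| and ε_λ = |λ̂ − λ|. Then |√(c² − m·λ) − √(ĉ² − m̂·λ̂)| ≤ √(ε_c·(2c + ε_c)) + √(m·ε_λ) + √(ε_λ·ε_m) + √(|λ|·ε_m). -/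
lemma sqrt_add_le' (x y : ℝ) : Real.sqrt (x + y) ≤ Real.sqrt x + Real.sqrt y := by
  rcases le_or_gt (x + y) 0 with h | h
  · rw [Real.sqrt_eq_zero_of_nonpos h]
    positivity
  · rw [show x + y = (Real.sqrt x + Real.sqrt y) ^ 2 - 2 * (Real.sqrt x * Real.sqrt y)
        + (x - Real.sqrt x ^ 2) + (y - Real.sqrt y ^ 2) by ring]
    have h1 : x - Real.sqrt x ^ 2 ≤ 0 := by
      rcases le_or_gt 0 x with hx0 | hx0
      · rw [Real.sq_sqrt hx0]; linarith
      · have : Real.sqrt x = 0 := Real.sqrt_eq_zero_of_nonpos hx0.le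
        rw [this]; nlinarith
    have h2 : y - Real.sqrt y ^ 2 ≤ 0 := by
      rcases le_or_gt 0 y with hy0 | hy0
      · rw [Real.sq_sqrt hy0]; linarith
      · have : Real.sqrt y = 0 := Real.sqrt_eq_zero_of_nonpos hy0.le
        rw [this]; nlinarith
    have h3 : 0 ≤ Real.sqrt x * Real.sqrt y := by positivity
    calc Real.sqrt ((Real.sqrt x + Real.sqrt y) ^ 2 - 2 * (Real.sqrt x * Real.sqrt y)
          + (x - Real.sqrt x ^ 2) + (y - Real.sqrt y ^ 2))
        ≤ Real.sqrt ((Real.sqrt x + Real.sqrt y) ^ 2) := by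
          apply Real.sqrt_le_sqrt; linarith
      _ = Real.sqrt x + Real.sqrt y := Real.sqrt_sq (by positivity)

lemma abs_sqrt_sub_sqrt_le (a b : ℝ) (ha : 0 ≤ a) (hb : 0 ≤ b) :
    |Real.sqrt a - Real.sqrt b| ≤ Real.sqrt |a - b| := by
  wlog hab : b ≤ a generalizing a b
  · rw [abs_sub_comm, abs_sub_comm a b]; exact this b a hb ha (le_of_not_ge hab)
  rw [abs_of_nonneg (by linarith : (0:ℝ) ≤ a - b),
    abs_of_nonneg (sub_nonneg.mpr (Real.sqrt_le_sqrt hab)), sub_le_iff_le_add]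
  have h := sqrt_add_le' (a - b) b
  rw [show a - b + b = a by ring] at h
  linarith

theorem stmt14 (m mhat c chat lam lamhat : ℝ)
    (hm : 0 ≤ m) (hc : 0 ≤ c) (hchat : 0 ≤ chat)
    (h1 : m * lam ≤ c ^ 2) (h2 : mhat * lamhat ≤ chat ^ 2) :
    |Real.sqrt (c ^ 2 - m * lam) - Real.sqrt (chat ^ 2 - mhat * lamhat)| ≤
      Real.sqrt (|chat - c| * (2 * c + |chat - c|)) + Real.sqrt (m * |lamhat - lam|) +
        Real.sqrt (|lamhat - lam| * |mhat - m|) + Real.sqrt (|lam| * |mhat - m|) := by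
  set A := c ^ 2 - m * lam
  set B := chat ^ 2 - mhat * lamhat
  have hA : 0 ≤ A := by simp [A]; linarith
  have hB : 0 ≤ B := by simp [B]; linarith
  have key : |A - B| ≤ |chat - c| * (2 * c + |chat - c|) + m * |lamhat - lam| +
      |lamhat - lam| * |mhat - m| + |lam| * |mhat - m| := by
    have hcc : |chat ^ 2 - c ^ 2| ≤ |chat - c| * (2 * c + |chat - c|) := by
      have h : chat ^ 2 - c ^ 2 = (chat - c) * (chat + c) := by ring
      rw [h, abs_mul]
      apply mul_le_mul_of_nonneg_left _ (abs_nonneg _)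
      have h1 : chat - c ≤ |chat - c| := le_abs_self _
      rw [abs_of_nonneg (by linarith : (0:ℝ) ≤ chat + c)]
      linarith
    have hml : |mhat * lamhat - m * lam| ≤ m * |lamhat - lam| +
        |lamhat - lam| * |mhat - m| + |lam| * |mhat - m| := by
      have h : mhat * lamhat - m * lam = m * (lamhat - lam) + (mhat - m) * lamhat := by
        ring
      rw [h]
      calc |m * (lamhat - lam) + (mhat - m) * lamhat|
          ≤ |m * (lamhat - lam)| + |(mhat - m) * lamhat| := abs_add_le _ _
        _ = m * |lamhat - lam| + |mhat - m| * |lamhat| := by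
            rw [abs_mul, abs_mul, abs_of_nonneg hm]
        _ ≤ m * |lamhat - lam| + |mhat - m| * (|lam| + |lamhat - lam|) := by
            have : |lamhat| ≤ |lam| + |lamhat - lam| := by
              calc |lamhat| = |lam + (lamhat - lam)| := by ring_nf
                _ ≤ |lam| + |lamhat - lam| := abs_add_le _ _
            nlinarith [abs_nonneg (mhat - m)]
        _ = m * |lamhat - lam| + |lamhat - lam| * |mhat - m| + |lam| * |mhat - m| := by
            ring
    have hAB : A - B = -((chat ^ 2 - c ^ 2) - (mhat * lamhat - m * lam)) := by
      simp only [A, B]; ring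
    calc |A - B| = |(chat ^ 2 - c ^ 2) - (mhat * lamhat - m * lam)| := by
          rw [hAB, abs_neg]
      _ ≤ |chat ^ 2 - c ^ 2| + |mhat * lamhat - m * lam| := abs_sub _ _
      _ ≤ _ := by linarith
  calc |Real.sqrt A - Real.sqrt B| ≤ Real.sqrt |A - B| := abs_sqrt_sub_sqrt_le _ _ hA hB
    _ ≤ Real.sqrt (|chat - c| * (2 * c + |chat - c|) + m * |lamhat - lam| +
        |lamhat - lam| * |mhat - m| + |lam| * |mhat - m|) := Real.sqrt_le_sqrt key
    _ ≤ _ := by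
        calc Real.sqrt (|chat - c| * (2 * c + |chat - c|) + m * |lamhat - lam| +
              |lamhat - lam| * |mhat - m| + |lam| * |mhat - m|)
            ≤ Real.sqrt (|chat - c| * (2 * c + |chat - c|) + m * |lamhat - lam| +
              |lamhat - lam| * |mhat - m|) + Real.sqrt (|lam| * |mhat - m|) :=
              sqrt_add_le' _ _
          _ ≤ Real.sqrt (|chat - c| * (2 * c + |chat - c|) + m * |lamhat - lam|) +
              Real.sqrt (|lamhat - lam| * |mhat - m|) + Real.sqrt (|lam| * |mhat - m|) := by
              have := sqrt_add_le' (|chat - c| * (2 * c + |chat - c|) + m * |lamhat - lam|)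
                (|lamhat - lam| * |mhat - m|)
              linarith
          _ ≤ _ := by
              have := sqrt_add_le' (|chat - c| * (2 * c + |chat - c|)) (m * |lamhat - lam|)
              linarith
end

section
/- (Precise form of Lemma E.11.) Let ĉ, m̂, λ̂ be real numbers with ĉ > 0, λ̂ ≠ 0 and m̂·λ̂ ≤ ĉ². Then |(ĉ − √(ĉ² − m̂·λ̂))/λ̂ − m̂/(2ĉ)| = m̂²·|λ̂| / ( 2ĉ·(ĉ + √(ĉ² − m̂·λ̂))² ) ≤ m̂²·|λ̂| / (2ĉ³). -/
/-!
Rationalizing, `(ĉ - s) / λ̂ = m̂ / (ĉ + s)` for `s = √(ĉ² - m̂λ̂)`; subtracting `m̂ / (2ĉ)` and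
rationalizing once more gives `m̂ (ĉ - s) / (2ĉ (ĉ + s)) = m̂² λ̂ / (2ĉ (ĉ + s)²)`.
The bound is then `ĉ ≤ ĉ + s`.
-/

namespace Real

variable {c m l : ℝ}

lemma sub_sqrt_sq_sub_mul_div_eq (hc : 0 < c) (hl : l ≠ 0) (h : m * l ≤ c ^ 2) :
    (c - √(c ^ 2 - m * l)) / l = m / (c + √(c ^ 2 - m * l)) := by
  have hs : √(c ^ 2 - m * l) ^ 2 = c ^ 2 - m * l := sq_sqrt (by linarith)
  have hpos : 0 < c + √(c ^ 2 - m * l) := by positivity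
  rw [div_eq_div_iff hl hpos.ne']
  linear_combination -hs

lemma div_add_sqrt_sq_sub_mul_sub_div_eq (hc : 0 < c) (h : m * l ≤ c ^ 2) :
    m / (c + √(c ^ 2 - m * l)) - m / (2 * c) =
      m ^ 2 * l / (2 * c * (c + √(c ^ 2 - m * l)) ^ 2) := by
  have hs : √(c ^ 2 - m * l) ^ 2 = c ^ 2 - m * l := sq_sqrt (by linarith)
  have hpos : 0 < c + √(c ^ 2 - m * l) := by positivity
  field_simp
  linear_combination (-m) * hs

lemma pow_three_le_mul_add_sqrt_sq (hc : 0 < c) (x : ℝ) :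
    c ^ 3 ≤ c * (c + √x) ^ 2 := by
  calc c ^ 3 = c * c ^ 2 := by ring
    _ ≤ c * (c + √x) ^ 2 := by
      gcongr
      exact le_add_of_nonneg_right (sqrt_nonneg x)

end Real

open Real in
theorem stmt15 (chat mhat lamhat : ℝ) (hc : 0 < chat) (hlam : lamhat ≠ 0)
    (h : mhat * lamhat ≤ chat ^ 2) :
    |(chat - Real.sqrt (chat ^ 2 - mhat * lamhat)) / lamhat - mhat / (2 * chat)| =
        mhat ^ 2 * |lamhat| /
          (2 * chat * (chat + Real.sqrt (chat ^ 2 - mhat * lamhat)) ^ 2) ∧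
      mhat ^ 2 * |lamhat| /
          (2 * chat * (chat + Real.sqrt (chat ^ 2 - mhat * lamhat)) ^ 2) ≤
        mhat ^ 2 * |lamhat| / (2 * chat ^ 3) := by
  have hden : 0 < 2 * chat * (chat + √(chat ^ 2 - mhat * lamhat)) ^ 2 := by positivity
  refine ⟨?_, ?_⟩
  · rw [sub_sqrt_sq_sub_mul_div_eq hc hlam h, div_add_sqrt_sq_sub_mul_sub_div_eq hc h,
      abs_div, abs_of_pos hden, abs_mul, abs_sq]
  · refine div_le_div_of_nonneg_left (by positivity) (by positivity) ?_
    linarith [pow_three_le_mul_add_sqrt_sq hc (chat ^ 2 - mhat * lamhat)]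
end
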